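/- arXiv:1904.03322 — 2 statements merged into one kernel-verified Lean document; each statement's English description precedes it below -/
import Mathlib

section
/- Let h be any constraint curve and let (x, g) be a price curve equilibrium. Define constraint curves f by f_j = h if g_j is identically zero, and f_j = g_j otherwise; define bids b by b_{ij} = β if g_j is identically zero and j ∈ R_i, b_{ij} = 0 if g_j is identically zero and j ∉ R_i, and b_{ij} = x_{ij} otherwise. Then b is a Nash equilibrium of ATP(f). -/
open scoped Classical
open Real

namespace BandwidthAlloc

/-- A bid: `none` denotes the special bid β; `some r` denotes the real bid `r ≥ 0`. -/
abbrev Bid := Option NNReal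

/-- Numeric value of a bid (β is treated as 0 in arithmetic). -/
noncomputable def bval (b : Bid) : ℝ := ((b.getD 0 : NNReal) : ℝ)

/-- A bid is positive when it is neither 0 nor β. -/
def posBid (b : Bid) : Prop := 0 < bval b

/-- Utility of the bundle `xi` for an agent with desired set `Ri`: `min_{j ∈ Ri} xi j`. -/
noncomputable def bundleUtil {m : ℕ} (Ri : Finset (Fin m)) (xi : Fin m → ℝ) : ℝ :=
  sInf (xi '' (Ri : Set (Fin m)))

/-- Bandwidth-allocation utility of agent `i` under allocation `x`. -/
noncomputable def util {n m : ℕ} (R : Fin n → Finset (Fin m))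
    (x : Fin n → Fin m → ℝ) (i : Fin n) : ℝ :=
  bundleUtil (R i) (x i)

/-- Weights: `w R i j = 1` iff `j ∈ R i`, else `0`. -/
noncomputable def w {n m : ℕ} (R : Fin n → Finset (Fin m)) (i : Fin n) (j : Fin m) : ℝ :=
  if j ∈ R i then 1 else 0

/-- A valid (nonnegative, supply-respecting) allocation. -/
def validAlloc {n m : ℕ} (s : Fin m → ℝ) (x : Fin n → Fin m → ℝ) : Prop :=
  (∀ i j, 0 ≤ x i j) ∧ ∀ j, ∑ i, x i j ≤ s j

/-- CES welfare of the utility vector `v` (`ρ = 0` is Nash welfare; for `ρ < 0` a zero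
utility yields welfare `0`, the limiting convention). -/
noncomputable def ces (ρ : ℝ) {n : ℕ} (v : Fin n → ℝ) : ℝ :=
  if ρ = 0 then ∏ i, v i
  else if ρ < 0 ∧ ∃ i, v i = 0 then 0
  else (∑ i, v i ^ ρ) ^ (1 / ρ)

/-- `Ψ_ρ`: `x` is a valid allocation maximizing CES welfare among valid allocations. -/
def maxCES (ρ : ℝ) {n m : ℕ} (s : Fin m → ℝ) (R : Fin n → Finset (Fin m))
    (x : Fin n → Fin m → ℝ) : Prop :=
  validAlloc s x ∧ ∀ y, validAlloc s y → ces ρ (util R y) ≤ ces ρ (util R x)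

/-- Constraint curve: continuous, normalized, strictly increasing, nonnegative on `[0,∞)`. -/
def IsConstraintCurve (f : ℝ → ℝ) : Prop :=
  ContinuousOn f (Set.Ici 0) ∧ f 0 = 0 ∧ StrictMonoOn f (Set.Ici 0) ∧
    ∀ y ∈ Set.Ici (0 : ℝ), 0 ≤ f y

/-- `g` is identically zero on `[0,∞)`. -/
def zeroOn (g : ℝ → ℝ) : Prop := ∀ y ∈ Set.Ici (0 : ℝ), g y = 0

/-- Price curve: continuous, normalized, nonnegative, and either strictly increasing or
identically zero on `[0,∞)`. -/
def IsPriceCurve (g : ℝ → ℝ) : Prop :=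
  ContinuousOn g (Set.Ici 0) ∧ g 0 = 0 ∧ (∀ y ∈ Set.Ici (0 : ℝ), 0 ≤ g y) ∧
    (StrictMonoOn g (Set.Ici 0) ∨ zeroOn g)

/-- Cost of the bundle `xi` under price curves `g`. -/
noncomputable def cost {m : ℕ} (g : Fin m → ℝ → ℝ) (xi : Fin m → ℝ) : ℝ :=
  ∑ j, g j (xi j)

/-- `xi` is in the demand set of an agent with desired set `Ri` under price curves `g`. -/
def inDemand {m : ℕ} (g : Fin m → ℝ → ℝ) (Ri : Finset (Fin m)) (xi : Fin m → ℝ) : Prop :=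
  (∀ j, 0 ≤ xi j) ∧ cost g xi ≤ 1 ∧
    ∀ yi : Fin m → ℝ, (∀ j, 0 ≤ yi j) → cost g yi ≤ 1 → bundleUtil Ri yi ≤ bundleUtil Ri xi

/-- Price curve equilibrium. -/
def isPCE {n m : ℕ} (s : Fin m → ℝ) (R : Fin n → Finset (Fin m))
    (x : Fin n → Fin m → ℝ) (g : Fin m → ℝ → ℝ) : Prop :=
  (∀ i, inDemand g (R i) (x i)) ∧ (∀ j, ∑ i, x i j ≤ s j) ∧
    ∀ j, ¬ zeroOn (g j) → ∑ i, x i j = s j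

/-- Step 1 of the ATP allocation rule: proportional sharing. -/
noncomputable def atp1 {n m : ℕ} (s : Fin m → ℝ) (b : Fin n → Fin m → Bid)
    (i : Fin n) (j : Fin m) : ℝ :=
  bval (b i j) / (∑ k, bval (b k j)) * s j

/-- Steps 1–2 of the ATP allocation rule: goods with a positive bid are shared
proportionally; on a good where everyone bids `0` or `β`, an agent bidding `β` receives
as much as she receives of some fixed good on which she bids positively. -/
noncomputable def atp2 {n m : ℕ} (s : Fin m → ℝ) (b : Fin n → Fin m → Bid)
    (i : Fin n) (j : Fin m) : ℝ :=
  if ∃ k, posBid (b k j) then atp1 s b i j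
  else if b i j = none then
    (if h : ∃ ℓ, posBid (b i ℓ) then atp1 s b i (Classical.choose h) else 0)
  else 0

/-- The full ATP allocation rule (steps 1–3): agents bidding `β` on an oversubscribed
step-2 good are penalized with the zero bundle. -/
noncomputable def atp {n m : ℕ} (s : Fin m → ℝ) (b : Fin n → Fin m → Bid)
    (i : Fin n) (j : Fin m) : ℝ :=
  if ∃ ℓ, (¬ ∃ k, posBid (b k ℓ)) ∧ b i ℓ = none ∧ s ℓ < ∑ k, atp2 s b k ℓ then 0
  else atp2 s b i j

/-- Total bid-constraint cost `C_f(b_i)` of agent `i`'s bid vector. -/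
noncomputable def bidCost {m : ℕ} (f : Fin m → ℝ → ℝ) (bi : Fin m → Bid) : ℝ :=
  ∑ j, f j (bval (bi j))

/-- A bid vector is feasible if it obeys the bid constraint `C_f(b_i) ≤ 1`. -/
def feasibleBid {m : ℕ} (f : Fin m → ℝ → ℝ) (bi : Fin m → Bid) : Prop :=
  bidCost f bi ≤ 1

/-- `b` is a Nash equilibrium of `ATP(f)`: all bids are feasible and no agent can
strictly increase her utility by a unilateral feasible deviation. -/
def isNE {n m : ℕ} (s : Fin m → ℝ) (f : Fin m → ℝ → ℝ)
    (R : Fin n → Finset (Fin m)) (b : Fin n → Fin m → Bid) : Prop :=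
  (∀ i, feasibleBid f (b i)) ∧
    ∀ (i : Fin n) (bi' : Fin m → Bid), feasibleBid f bi' →
      util R (atp s (Function.update b i bi')) i ≤ util R (atp s b) i

/-- `NE_X(ATP(f))`: allocations arising from Nash equilibrium bid profiles. -/
def NEX {n m : ℕ} (s : Fin m → ℝ) (f : Fin m → ℝ → ℝ)
    (R : Fin n → Finset (Fin m)) : Set (Fin n → Fin m → ℝ) :=
  {x | ∃ b, isNE s f R b ∧ x = atp s b}

/-- `f` is homogeneous of degree `α` on the nonnegative reals. -/
def Homog (f : ℝ → ℝ) (α : ℝ) : Prop :=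
  ∀ c ≥ (0 : ℝ), ∀ y ≥ (0 : ℝ), f (c * y) = c ^ α * f y

/-- `γ* = max {γ ≥ 0 : γ · Σ_i w_{ij} ≤ s_j for all j}` of Mechanism 1. -/
noncomputable def gammaStar {n m : ℕ} (s : Fin m → ℝ) (R : Fin n → Finset (Fin m)) : ℝ :=
  sSup {γ : ℝ | 0 ≤ γ ∧ ∀ j, γ * ∑ i, w R i j ≤ s j}

/-- Mechanism 1: `x i j = γ* · w i j`. -/
noncomputable def mech1 {n m : ℕ} (s : Fin m → ℝ) (R : Fin n → Finset (Fin m)) :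
    Fin n → Fin m → ℝ :=
  fun i j => gammaStar s R * w R i j

/-- `min_i u_i(x_i)`. -/
noncomputable def minUtil {n m : ℕ} (R : Fin n → Finset (Fin m))
    (x : Fin n → Fin m → ℝ) : ℝ :=
  sInf (Set.range fun i => util R x i)

/-- `x` is maxmin-optimal: valid and attaining the maximum of `min_i u_i` over valid
allocations. -/
def maxminOptimal {n m : ℕ} (s : Fin m → ℝ) (R : Fin n → Finset (Fin m))
    (x : Fin n → Fin m → ℝ) : Prop :=
  validAlloc s x ∧ ∀ y, validAlloc s y → minUtil R y ≤ minUtil R x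

/-- Mechanism 2: `P i k` is the set agent `i` claims agent `k` desires.
`eta P i = |{k : R_k(k) ≠ R_k(i)}|`. -/
noncomputable def eta {n m : ℕ} (P : Fin n → Fin n → Finset (Fin m)) (i : Fin n) : ℕ :=
  (Finset.univ.filter fun k => P k k ≠ P i k).card

/-- Agent `i` is in `N̄`: for some `k`, `R_k(k) ⊊ R_k(i)`. -/
def inNbar {n m : ℕ} (P : Fin n → Fin n → Finset (Fin m)) (i : Fin n) : Prop :=
  ∃ k, P k k ⊂ P i k

/-- The penalty factor `α_i` of Mechanism 2. -/
noncomputable def alpha {n m : ℕ} (P : Fin n → Fin n → Finset (Fin m)) (i : Fin n) : ℝ :=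
  if inNbar P i then 0 else 1 - (eta P i : ℝ) / n

/-- Effective reported sets of Mechanism 2: agents in `N̄` are replaced by `∅`. -/
noncomputable def effSets {n m : ℕ} (P : Fin n → Fin n → Finset (Fin m)) :
    Fin n → Finset (Fin m) :=
  fun i => if inNbar P i then ∅ else P i i

/-- Mechanism 2: the allocation `x_i = α_i · y_i` where `y` is the Mechanism 1 outcome
on the effective sets. -/
noncomputable def mech2 {n m : ℕ} (s : Fin m → ℝ) (P : Fin n → Fin n → Finset (Fin m)) :
    Fin n → Fin m → ℝ :=
  fun i j => alpha P i * mech1 s (effSets P) i j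

/-!
In a price curve equilibrium every agent desires some priced good, holds none of the priced
goods she does not desire, and holds exactly her utility `u_i` of each priced good she desires:
otherwise she could spend strictly less than her budget for the same utility and, prices being
continuous, afford slightly more of every good. Hence under the bids `b` the mechanism hands out
`x` on priced goods and `u_i` on desired free goods without ever triggering the penalty of
step 3, so every agent still gets `u_i`. If a deviation `b'_i` gave agent `i` more than `u_i`,
she would receive at most `b'_{ij}` of each desired priced good `j`, so her new bundle restricted
to `R_i` would cost at most `Σ_j f_j(b'_{ij}) ≤ 1` under `g`, contradicting that `x_i` is demanded.
-/

lemma bundleUtil_le {m : ℕ} {Ri : Finset (Fin m)} {xi : Fin m → ℝ} {j : Fin m}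
    (hj : j ∈ Ri) : bundleUtil Ri xi ≤ xi j :=
  csInf_le (Ri.finite_toSet.image xi).bddBelow ⟨j, hj, rfl⟩

lemma le_bundleUtil {m : ℕ} {Ri : Finset (Fin m)} (hRi : Ri.Nonempty) {xi : Fin m → ℝ}
    {a : ℝ} (ha : ∀ j ∈ Ri, a ≤ xi j) : a ≤ bundleUtil Ri xi :=
  le_csInf (hRi.to_set.image xi) (by rintro _ ⟨j, hj, rfl⟩; exact ha j hj)

lemma bundleUtil_congr {m : ℕ} {Ri : Finset (Fin m)} {xi yi : Fin m → ℝ}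
    (h : ∀ j ∈ Ri, xi j = yi j) : bundleUtil Ri xi = bundleUtil Ri yi := by
  unfold bundleUtil
  rw [Set.image_congr fun j hj => h j hj]

lemma bundleUtil_const {m : ℕ} {Ri : Finset (Fin m)} (hRi : Ri.Nonempty) (c : ℝ) :
    bundleUtil Ri (fun _ => c) = c := by
  rw [bundleUtil, hRi.to_set.image_const, csInf_singleton]

lemma bval_nonneg (b : Bid) : 0 ≤ bval b := (b.getD 0).coe_nonneg

lemma atp2_nonneg {n m : ℕ} {s : Fin m → ℝ} (hs : ∀ j, 0 ≤ s j)
    (b : Fin n → Fin m → Bid) (i : Fin n) (j : Fin m) : 0 ≤ atp2 s b i j := by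
  have hatp1 : ∀ ℓ, 0 ≤ atp1 s b i ℓ := fun ℓ =>
    mul_nonneg (div_nonneg (bval_nonneg _) (Finset.sum_nonneg fun _ _ => bval_nonneg _)) (hs ℓ)
  unfold atp2
  split_ifs <;> first | exact hatp1 _ | exact le_rfl

lemma cost_update {m : ℕ} (g : Fin m → ℝ → ℝ) (xi : Fin m → ℝ) (j : Fin m) (v : ℝ) :
    cost g (Function.update xi j v) + g j (xi j) = cost g xi + g j v := by
  unfold cost
  rw [← Finset.add_sum_erase _ _ (Finset.mem_univ j),
    ← Finset.add_sum_erase _ _ (Finset.mem_univ j), Function.update_self,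
    Finset.sum_congr rfl fun ℓ hℓ => by rw [Function.update_of_ne (Finset.ne_of_mem_erase hℓ)]]
  ring

lemma exists_pos_cost_add_lt {m : ℕ} {g : Fin m → ℝ → ℝ}
    (hg : ∀ j, ContinuousOn (g j) (Set.Ici 0)) {z : Fin m → ℝ} (hz : ∀ j, 0 ≤ z j) {c : ℝ}
    (hc : cost g z < c) : ∃ ε > 0, cost g (fun j => z j + ε) < c := by
  have hcont : ContinuousOn (fun ε => cost g (fun j => z j + ε)) (Set.Ici 0) :=
    continuousOn_finsetSum _ fun j _ => (hg j).comp (continuousOn_const.add continuousOn_id)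
      fun ε hε => add_nonneg (hz j) hε
  have hev := (hcont 0 Set.self_mem_Ici).eventually_lt_const (by simpa using hc)
  obtain ⟨ε, hεc, hε⟩ := ((hev.filter_mono (nhdsWithin_mono _ Set.Ioi_subset_Ici_self)).and
    self_mem_nhdsWithin).exists
  exact ⟨ε, hε, hεc⟩

namespace inDemand

variable {m : ℕ} {g : Fin m → ℝ → ℝ} {Ri : Finset (Fin m)} {xi : Fin m → ℝ}

/-- A bundle doing at least as well as a demanded one exhausts the budget: otherwise adding
a small `ε` to every coordinate would keep it affordable and beat the demanded bundle. -/
lemma one_le_cost (hg : ∀ j, ContinuousOn (g j) (Set.Ici 0)) (hRi : Ri.Nonempty)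
    (hxi : inDemand g Ri xi) {z : Fin m → ℝ} (hz : ∀ j, 0 ≤ z j)
    (hu : bundleUtil Ri xi ≤ bundleUtil Ri z) : 1 ≤ cost g z := by
  by_contra! hc
  obtain ⟨ε, hε, hεc⟩ := exists_pos_cost_add_lt hg hz hc
  have hzε : bundleUtil Ri z + ε ≤ bundleUtil Ri (fun j => z j + ε) :=
    le_bundleUtil hRi fun j hj => by linarith [bundleUtil_le (xi := z) hj]
  have := hxi.2.2 _ (fun j => by linarith [hz j]) hεc.le
  linarith

lemma exists_mem_not_zeroOn (hg : ∀ j, IsPriceCurve (g j)) (hRi : Ri.Nonempty)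
    (hxi : inDemand g Ri xi) : ∃ j ∈ Ri, ¬ zeroOn (g j) := by
  by_contra! hfree
  let z : Fin m → ℝ := fun j => if j ∈ Ri then xi j else 0
  have hz : ∀ j, 0 ≤ z j := fun j => by dsimp only [z]; split_ifs <;> simp [hxi.1 j]
  have hcost : cost g z = 0 := Finset.sum_eq_zero fun j _ => by
    dsimp only [z]; split_ifs with hj
    exacts [hfree j hj _ (hxi.1 j), (hg j).2.1]
  have := hxi.one_le_cost (fun j => (hg j).1) hRi hz
    (bundleUtil_congr fun j hj => if_pos hj).symm.le
  linarith

lemma apply_eq_zero_of_notMem (hg : ∀ j, IsPriceCurve (g j)) (hRi : Ri.Nonempty)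
    (hxi : inDemand g Ri xi) {j : Fin m} (hj : j ∉ Ri) (hpriced : ¬ zeroOn (g j)) :
    xi j = 0 := by
  by_contra hne
  have hpos : 0 < xi j := (hxi.1 j).lt_of_ne' hne
  have hgpos : g j 0 < g j (xi j) :=
    ((hg j).2.2.2.resolve_right hpriced) Set.self_mem_Ici (hxi.1 j) hpos
  have := hxi.one_le_cost (fun j => (hg j).1) hRi (z := Function.update xi j 0)
    (fun ℓ => by rcases eq_or_ne ℓ j with rfl | h <;> simp [*, hxi.1 ℓ])
    (bundleUtil_congr fun ℓ hℓ => (Function.update_of_ne (ne_of_mem_of_not_mem hℓ hj) _ _).symm).le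
  linarith [cost_update g xi j 0, hxi.2.1]

lemma apply_eq_bundleUtil (hg : ∀ j, IsPriceCurve (g j)) (hRi : Ri.Nonempty)
    (hxi : inDemand g Ri xi) {j : Fin m} (hj : j ∈ Ri) (hpriced : ¬ zeroOn (g j)) :
    xi j = bundleUtil Ri xi := by
  set u := bundleUtil Ri xi
  have hu : 0 ≤ u := le_bundleUtil hRi fun ℓ _ => hxi.1 ℓ
  by_contra hne
  have hlt : u < xi j := (bundleUtil_le hj).lt_of_ne' hne
  have hgu : g j u < g j (xi j) := ((hg j).2.2.2.resolve_right hpriced) hu (hxi.1 j) hlt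
  have := hxi.one_le_cost (fun j => (hg j).1) hRi (z := Function.update xi j u)
    (fun ℓ => by rcases eq_or_ne ℓ j with rfl | h <;> simp [*, hxi.1 ℓ])
    (le_bundleUtil hRi fun ℓ hℓ => by
      rcases eq_or_ne ℓ j with rfl | h
      · exact (Function.update_self ℓ u xi).ge
      · simpa [h] using bundleUtil_le hℓ)
  linarith [cost_update g xi j u, hxi.2.1]

end inDemand

/-- Against fixed opposing bids summing to `s j - a`, an allocation exceeding `a` is never more
than one's own bid: proportional sharing gives `β s / (β + s - a)`, which exceeds `a` only when
`β > a`, and then it is at most `β`. The hypothesis `hβ` is what step 3 of the mechanism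
guarantees when nobody bids positively. -/
lemma atp2_le_bval_of_lt {n m : ℕ} {s : Fin m → ℝ} {b : Fin n → Fin m → Bid} {i : Fin n}
    {j : Fin m} {a : ℝ} (hothers : ∑ k ∈ Finset.univ.erase i, bval (b k j) = s j - a)
    (has : a ≤ s j) (hβ : (¬ ∃ k, posBid (b k j)) → b i j = none → atp2 s b i j ≤ s j)
    (hlt : a < atp2 s b i j) : atp2 s b i j ≤ bval (b i j) := by
  have hsum : ∑ k, bval (b k j) = bval (b i j) + (s j - a) := by
    rw [← Finset.add_sum_erase _ _ (Finset.mem_univ i), hothers]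
  by_cases hpos : posBid (b i j)
  · have hβ0 : 0 < bval (b i j) := hpos
    have hden : 0 < bval (b i j) + (s j - a) := by linarith
    have hshare : atp2 s b i j = bval (b i j) * s j / (bval (b i j) + (s j - a)) := by
      rw [atp2, if_pos ⟨i, hpos⟩, atp1, hsum, div_mul_eq_mul_div]
    rw [hshare, lt_div_iff₀ hden] at hlt
    have hab : a < bval (b i j) := by
      by_contra! hba
      nlinarith [mul_nonneg (sub_nonneg.2 has) (sub_nonneg.2 hba)]
    rw [hshare, div_le_iff₀ hden]
    nlinarith [mul_pos hβ0 (sub_pos.2 hab)]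
  · have hb0 : bval (b i j) = 0 := le_antisymm (not_lt.1 hpos) (bval_nonneg _)
    by_cases hex : ∃ k, posBid (b k j)
    · simp [atp2, hex, atp1, hb0]
    by_cases hnone : b i j = none
    · have hzero : ∑ k ∈ Finset.univ.erase i, bval (b k j) = 0 :=
        Finset.sum_eq_zero fun k _ =>
          le_antisymm (not_lt.1 fun hk => hex ⟨k, hk⟩) (bval_nonneg _)
      linarith [hβ hex hnone]
    · rw [atp2, if_neg hex, if_neg hnone, hb0]

lemma atp2_le_of_not_penalized {n m : ℕ} {s : Fin m → ℝ} (hs : ∀ j, 0 ≤ s j)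
    {b : Fin n → Fin m → Bid} {i : Fin n}
    (hpen : ¬ ∃ ℓ, (¬ ∃ k, posBid (b k ℓ)) ∧ b i ℓ = none ∧ s ℓ < ∑ k, atp2 s b k ℓ)
    {j : Fin m} (hno : ¬ ∃ k, posBid (b k j)) (hβ : b i j = none) : atp2 s b i j ≤ s j :=
  (Finset.single_le_sum (fun k _ => atp2_nonneg hs b k j) (Finset.mem_univ i)).trans <|
    not_lt.1 fun hover => hpen ⟨j, hno, hβ, hover⟩

/-- The constraint curves `f` of the theorem. -/
noncomputable def pceCurves {m : ℕ} (h : ℝ → ℝ) (g : Fin m → ℝ → ℝ) : Fin m → ℝ → ℝ :=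
  fun j => if zeroOn (g j) then h else g j

/-- The bids `b` of the theorem. -/
noncomputable def pceBids {n m : ℕ} (R : Fin n → Finset (Fin m)) (x : Fin n → Fin m → ℝ)
    (g : Fin m → ℝ → ℝ) : Fin n → Fin m → Bid :=
  fun i j => if zeroOn (g j) then (if j ∈ R i then none else some 0)
    else some (x i j).toNNReal

section pceBids

variable {n m : ℕ} {s : Fin m → ℝ} {R : Fin n → Finset (Fin m)} {x : Fin n → Fin m → ℝ}
  {g : Fin m → ℝ → ℝ}

lemma bval_pceBids (hx : isPCE s R x g) (k : Fin n) (j : Fin m) :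
    bval (pceBids R x g k j) = if zeroOn (g j) then 0 else x k j := by
  unfold pceBids
  split_ifs
  exacts [rfl, rfl, Real.coe_toNNReal _ ((hx.1 k).1 j)]

lemma posBid_pceBids_iff (hx : isPCE s R x g) {k : Fin n} {j : Fin m} :
    posBid (pceBids R x g k j) ↔ ¬ zeroOn (g j) ∧ 0 < x k j := by
  unfold posBid
  rw [bval_pceBids hx]
  split_ifs <;> simp [*]

lemma atp1_pceBids_of_not_zeroOn (hs : ∀ j, 0 < s j) (hx : isPCE s R x g) {j : Fin m}
    (hpriced : ¬ zeroOn (g j)) (k : Fin n) : atp1 s (pceBids R x g) k j = x k j := by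
  have hsum : ∑ k, bval (pceBids R x g k j) = s j := by
    simp only [bval_pceBids hx, if_neg hpriced]
    exact hx.2.2 j hpriced
  rw [atp1, hsum, bval_pceBids hx, if_neg hpriced, div_mul_cancel₀ _ (hs j).ne']

lemma atp2_pceBids_of_not_zeroOn (hs : ∀ j, 0 < s j) (hx : isPCE s R x g) {j : Fin m}
    (hpriced : ¬ zeroOn (g j)) (k : Fin n) : atp2 s (pceBids R x g) k j = x k j := by
  have hex : ∃ k, posBid (pceBids R x g k j) := by
    have : ∑ _k : Fin n, (0 : ℝ) < ∑ k, x k j := by simpa [hx.2.2 j hpriced] using hs j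
    obtain ⟨k, -, hk⟩ := Finset.exists_lt_of_sum_lt this
    exact ⟨k, (posBid_pceBids_iff hx).2 ⟨hpriced, hk⟩⟩
  rw [atp2, if_pos hex, atp1_pceBids_of_not_zeroOn hs hx hpriced]

/-- On a free good every agent desiring it bids `β` and receives her equilibrium utility: the
positive bid she copies is on a priced good she desires, where she holds exactly that
utility. -/
lemma atp2_pceBids_of_zeroOn (hs : ∀ j, 0 < s j) (hR : ∀ i, (R i).Nonempty)
    (hg : ∀ j, IsPriceCurve (g j)) (hx : isPCE s R x g) {j : Fin m} (hfree : zeroOn (g j))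
    (k : Fin n) :
    atp2 s (pceBids R x g) k j = if j ∈ R k then util R x k else 0 := by
  have hno : ¬ ∃ t, posBid (pceBids R x g t j) := fun ⟨t, ht⟩ =>
    ((posBid_pceBids_iff hx).1 ht).1 hfree
  by_cases hj : j ∈ R k
  · rw [if_pos hj, atp2, if_neg hno, if_pos (by simp only [pceBids, if_pos hfree, if_pos hj])]
    split_ifs with hp
    · obtain ⟨hpriced, hxpos⟩ := (posBid_pceBids_iff hx).1 hp.choose_spec
      rw [atp1_pceBids_of_not_zeroOn hs hx hpriced]
      by_cases hℓ : hp.choose ∈ R k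
      · exact (hx.1 k).apply_eq_bundleUtil hg (hR k) hℓ hpriced
      · exact absurd ((hx.1 k).apply_eq_zero_of_notMem hg (hR k) hℓ hpriced) hxpos.ne'
    · obtain ⟨ℓ, hℓ, hpriced⟩ := (hx.1 k).exists_mem_not_zeroOn hg (hR k)
      have hxℓ : x k ℓ ≤ 0 := not_lt.1 fun h => hp ⟨ℓ, (posBid_pceBids_iff hx).2 ⟨hpriced, h⟩⟩
      rw [util]
      linarith [(hx.1 k).apply_eq_bundleUtil hg (hR k) hℓ hpriced, (hx.1 k).1 ℓ]
  · rw [if_neg hj, atp2, if_neg hno,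
      if_neg (by simp only [pceBids, if_pos hfree, if_neg hj]; exact Option.some_ne_none _)]

lemma atp2_pceBids_le (hs : ∀ j, 0 < s j) (hR : ∀ i, (R i).Nonempty)
    (hg : ∀ j, IsPriceCurve (g j)) (hx : isPCE s R x g) (k : Fin n) (j : Fin m) :
    atp2 s (pceBids R x g) k j ≤ x k j := by
  by_cases hfree : zeroOn (g j)
  · rw [atp2_pceBids_of_zeroOn hs hR hg hx hfree]
    split_ifs with hj
    exacts [bundleUtil_le hj, (hx.1 k).1 j]
  · exact (atp2_pceBids_of_not_zeroOn hs hx hfree k).le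

lemma atp_pceBids (hs : ∀ j, 0 < s j) (hR : ∀ i, (R i).Nonempty)
    (hg : ∀ j, IsPriceCurve (g j)) (hx : isPCE s R x g) :
    atp s (pceBids R x g) = atp2 s (pceBids R x g) := by
  funext i j
  refine if_neg ?_
  rintro ⟨ℓ, -, -, hover⟩
  exact hover.not_ge
    ((Finset.sum_le_sum fun k _ => atp2_pceBids_le hs hR hg hx k ℓ).trans (hx.2.1 ℓ))

lemma util_atp_pceBids (hs : ∀ j, 0 < s j) (hR : ∀ i, (R i).Nonempty)
    (hg : ∀ j, IsPriceCurve (g j)) (hx : isPCE s R x g) (i : Fin n) :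
    util R (atp s (pceBids R x g)) i = util R x i := by
  rw [atp_pceBids hs hR hg hx, util, ← bundleUtil_const (hR i) (util R x i)]
  refine bundleUtil_congr fun j hj => ?_
  by_cases hfree : zeroOn (g j)
  · rw [atp2_pceBids_of_zeroOn hs hR hg hx hfree, if_pos hj]
  · rw [atp2_pceBids_of_not_zeroOn hs hx hfree]
    exact (hx.1 i).apply_eq_bundleUtil hg (hR i) hj hfree

lemma feasibleBid_pceBids {h : ℝ → ℝ} (hh : h 0 = 0) (hx : isPCE s R x g) (i : Fin n) :
    feasibleBid (pceCurves h g) (pceBids R x g i) :=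
  calc bidCost (pceCurves h g) (pceBids R x g i) = cost g (x i) :=
        Finset.sum_congr rfl fun j _ => by
          simp only [pceCurves, bval_pceBids hx]
          split_ifs with hfree
          exacts [hh.trans (hfree _ ((hx.1 i).1 j)).symm, rfl]
    _ ≤ 1 := (hx.1 i).2.1

lemma atp2_update_pceBids_le_bval (hR : ∀ i, (R i).Nonempty) (hg : ∀ j, IsPriceCurve (g j))
    (hx : isPCE s R x g) {i : Fin n} {bi' : Fin m → Bid} {j : Fin m}
    (hβ : (¬ ∃ k, posBid (Function.update (pceBids R x g) i bi' k j)) → bi' j = none →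
      atp2 s (Function.update (pceBids R x g) i bi') i j ≤ s j)
    (hj : j ∈ R i) (hpriced : ¬ zeroOn (g j))
    (hlt : util R x i < atp2 s (Function.update (pceBids R x g) i bi') i j) :
    atp2 s (Function.update (pceBids R x g) i bi') i j ≤ bval (bi' j) := by
  have hothers : ∑ k ∈ Finset.univ.erase i,
      bval (Function.update (pceBids R x g) i bi' k j) = s j - x i j := by
    rw [Finset.sum_congr rfl fun k hk => by
      rw [Function.update_of_ne (Finset.ne_of_mem_erase hk), bval_pceBids hx, if_neg hpriced],
      ← hx.2.2 j hpriced, ← Finset.add_sum_erase _ _ (Finset.mem_univ i)]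
    ring
  have has : x i j ≤ s j := (Finset.single_le_sum (fun k _ => (hx.1 k).1 j)
    (Finset.mem_univ i)).trans_eq (hx.2.2 j hpriced)
  have hxij : x i j = util R x i := (hx.1 i).apply_eq_bundleUtil hg (hR i) hj hpriced
  simpa only [Function.update_self] using
    atp2_le_bval_of_lt hothers has (by simpa only [Function.update_self] using hβ) (hxij ▸ hlt)

end pceBids

lemma util_atp_update_pceBids_le {n m : ℕ} {s : Fin m → ℝ} {R : Fin n → Finset (Fin m)}
    {x : Fin n → Fin m → ℝ} {h : ℝ → ℝ} {g : Fin m → ℝ → ℝ} (hs : ∀ j, 0 < s j)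
    (hR : ∀ i, (R i).Nonempty) (hh : ∀ y ∈ Set.Ici (0 : ℝ), 0 ≤ h y)
    (hg : ∀ j, IsPriceCurve (g j)) (hx : isPCE s R x g) (i : Fin n) {bi' : Fin m → Bid}
    (hfeas : feasibleBid (pceCurves h g) bi') :
    util R (atp s (Function.update (pceBids R x g) i bi')) i ≤ util R x i := by
  set b' := Function.update (pceBids R x g) i bi'
  have hs0 : ∀ j, 0 ≤ s j := fun j => (hs j).le
  by_cases hpen : ∃ ℓ, (¬ ∃ k, posBid (b' k ℓ)) ∧ b' i ℓ = none ∧ s ℓ < ∑ k, atp2 s b' k ℓ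
  · obtain ⟨j, hj⟩ := hR i
    calc util R (atp s b') i ≤ atp s b' i j := bundleUtil_le hj
      _ = 0 := if_pos hpen
      _ ≤ util R x i := le_bundleUtil (hR i) fun j _ => (hx.1 i).1 j
  have hatp : ∀ j, atp s b' i j = atp2 s b' i j := fun j => if_neg hpen
  have hβ : ∀ ℓ, (¬ ∃ k, posBid (b' k ℓ)) → bi' ℓ = none → atp2 s b' i ℓ ≤ s ℓ :=
    fun ℓ hno hnone => atp2_le_of_not_penalized hs0 hpen hno (by simpa [b'] using hnone)
  by_contra! hlt
  let z : Fin m → ℝ := fun j => if j ∈ R i then atp2 s b' i j else 0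
  have hz : ∀ j, 0 ≤ z j := fun j => by
    dsimp only [z]; split_ifs; exacts [atp2_nonneg hs0 b' i j, le_rfl]
  have hzu : util R (atp s b') i = bundleUtil (R i) z :=
    bundleUtil_congr fun j hj => (hatp j).trans (if_pos hj).symm
  have hgz : ∀ j, g j (z j) ≤ pceCurves h g j (bval (bi' j)) := by
    intro j
    by_cases hfree : zeroOn (g j)
    · simp only [pceCurves, if_pos hfree, hfree _ (hz j)]
      exact hh _ (bval_nonneg _)
    simp only [pceCurves, if_neg hfree]
    by_cases hj : j ∈ R i
    · have hlt_j : util R x i < atp2 s b' i j :=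
        hlt.trans_le ((bundleUtil_le hj).trans_eq (hatp j))
      rw [show z j = atp2 s b' i j from if_pos hj]
      exact ((hg j).2.2.2.resolve_right hfree).monotoneOn (atp2_nonneg hs0 b' i j)
        (bval_nonneg _)
        (atp2_update_pceBids_le_bval hR hg hx (hβ j) hj hfree hlt_j)
    · rw [show z j = 0 from if_neg hj, (hg j).2.1]
      exact (hg j).2.2.1 _ (bval_nonneg _)
  have hzx := (hx.1 i).2.2 z hz ((Finset.sum_le_sum fun j _ => hgz j).trans hfeas)
  exact (hzu ▸ hlt).not_ge hzx

theorem pc_to_tp_general {n m : ℕ} (s : Fin m → ℝ) (hs : ∀ j, 0 < s j)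
    (R : Fin n → Finset (Fin m)) (hR : ∀ i, (R i).Nonempty)
    (h : ℝ → ℝ) (hh : IsConstraintCurve h)
    (g : Fin m → ℝ → ℝ) (hg : ∀ j, IsPriceCurve (g j))
    (x : Fin n → Fin m → ℝ) (hx : isPCE s R x g) :
    isNE s (fun j => if zeroOn (g j) then h else g j) R
      (fun i j => if zeroOn (g j) then (if j ∈ R i then none else some 0)
        else some (x i j).toNNReal) := by
  show isNE s (pceCurves h g) R (pceBids R x g)
  refine ⟨feasibleBid_pceBids hh.2.1 hx, fun i bi' hfeas => ?_⟩
  rw [util_atp_pceBids hs hR hg hx i]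
  exact util_atp_update_pceBids_le hs hR hh.2.2.2 hg hx i hfeas

/-- any price curve equilibrium `(x, g)` can be transformed into a Nash
equilibrium of `ATP(f)`, where `f_j = h` when `g_j ≡ 0` and `f_j = g_j` otherwise, and
bids are `β`/`0` on zero-priced goods (according to desire) and `x_{ij}` otherwise. -/
theorem pc_to_tp {n m : ℕ} (s : Fin m → ℝ) (hs : ∀ j, 0 < s j)
    (R : Fin n → Finset (Fin m)) (hR : ∀ i, (R i).Nonempty)
    (hcov : ∀ j, ∃ i, j ∈ R i)
    (h : ℝ → ℝ) (hh : IsConstraintCurve h)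
    (g : Fin m → ℝ → ℝ) (hg : ∀ j, IsPriceCurve (g j))
    (x : Fin n → Fin m → ℝ) (hx : isPCE s R x g) :
    isNE s (fun j => if zeroOn (g j) then h else g j) R
      (fun i j => if zeroOn (g j) then (if j ∈ R i then none else some 0)
        else some (x i j).toNNReal) :=
  pc_to_tp_general s hs R hR h hh g hg x hx

end BandwidthAlloc
end

section
/- Let a_1,…,a_m be positive constants and let f be constraint curves where each f_j is homogeneous of degree α_j > 0. Define constraint curves f' by f'_j(b) = a_j·f_j(b). Then every allocation that arises from some Nash equilibrium bid profile of ATP(f) also arises from some Nash equilibrium bid profile of ATP(f'), i.e., NE_X(ATP(f)) ⊆ NE_X(ATP(f')). -/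
open scoped Classical
open Real

namespace BandwidthAlloc

noncomputable def scaleBid {m : ℕ} (c : Fin m → NNReal) (bi : Fin m → Bid) : Fin m → Bid :=
  fun j => (bi j).map (c j * ·)

section scaleBid

variable {n m : ℕ} {c : Fin m → NNReal}

lemma bval_scaleBid (bi : Fin m → Bid) (j : Fin m) :
    bval (scaleBid c bi j) = c j * bval (bi j) := by
  cases h : bi j <;> simp only [scaleBid, bval, h, Option.map_none, Option.map_some,
    Option.getD_none, Option.getD_some, NNReal.coe_zero, NNReal.coe_mul, mul_zero]

lemma scaleBid_eq_none_iff (bi : Fin m → Bid) (j : Fin m) :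
    scaleBid c bi j = none ↔ bi j = none :=
  Option.map_eq_none_iff

lemma posBid_scaleBid_iff (hc : ∀ j, 0 < c j) (bi : Fin m → Bid) (j : Fin m) :
    posBid (scaleBid c bi j) ↔ posBid (bi j) := by
  rw [posBid, posBid, bval_scaleBid]
  exact mul_pos_iff_of_pos_left (NNReal.coe_pos.mpr (hc j))

lemma scaleBid_scaleBid_inv (hc : ∀ j, 0 < c j) (bi : Fin m → Bid) :
    scaleBid c (scaleBid (fun j => (c j)⁻¹) bi) = bi := by
  funext j
  cases h : bi j
  · simp only [scaleBid, h, Option.map_none]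
  · simp only [scaleBid, h, Option.map_some, ← mul_assoc, mul_inv_cancel₀ (hc j).ne', one_mul]

lemma atp1_scaleBid (hc : ∀ j, 0 < c j) (s : Fin m → ℝ) (b : Fin n → Fin m → Bid) :
    atp1 s (scaleBid c ∘ b) = atp1 s b := by
  funext i j
  simp only [atp1, Function.comp_apply, bval_scaleBid, ← Finset.mul_sum]
  rw [mul_div_mul_left _ _ (NNReal.coe_pos.mpr (hc j)).ne']

lemma atp2_scaleBid (hc : ∀ j, 0 < c j) (s : Fin m → ℝ) (b : Fin n → Fin m → Bid) :
    atp2 s (scaleBid c ∘ b) = atp2 s b := by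
  funext i j
  simp only [atp2, atp1_scaleBid hc, Function.comp_apply, scaleBid_eq_none_iff,
    posBid_scaleBid_iff hc]

lemma atp_scaleBid (hc : ∀ j, 0 < c j) (s : Fin m → ℝ) (b : Fin n → Fin m → Bid) :
    atp s (scaleBid c ∘ b) = atp s b := by
  funext i j
  simp only [atp, atp2_scaleBid hc, Function.comp_apply, scaleBid_eq_none_iff,
    posBid_scaleBid_iff hc]

theorem NEX_subset_of_bidCost_scaleBid (hc : ∀ j, 0 < c j) (s : Fin m → ℝ)
    (R : Fin n → Finset (Fin m)) {f f' : Fin m → ℝ → ℝ}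
    (hcost : ∀ bi, bidCost f' (scaleBid c bi) = bidCost f bi) :
    NEX s f R ⊆ NEX s f' R := by
  rintro _ ⟨b, ⟨hfeas, hne⟩, rfl⟩
  refine ⟨scaleBid c ∘ b, ⟨fun i => ?_, fun i bi' hbi' => ?_⟩, (atp_scaleBid hc s b).symm⟩
  · rw [feasibleBid, Function.comp_apply, hcost]
    exact hfeas i
  · set bi := scaleBid (fun j => (c j)⁻¹) bi'
    have hbi : scaleBid c bi = bi' := scaleBid_scaleBid_inv hc bi'
    have hfeas_bi : feasibleBid f bi := by rwa [feasibleBid, ← hcost, hbi]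
    rw [← hbi, ← Function.comp_update, atp_scaleBid hc, atp_scaleBid hc]
    exact hne i bi hfeas_bi

end scaleBid

lemma Homog.mul_apply_rpow_neg_inv_mul {g : ℝ → ℝ} {α a y : ℝ} (hg : Homog g α) (hα : 0 < α)
    (ha : 0 < a) (hy : 0 ≤ y) : a * g (a ^ (-α⁻¹) * y) = g y := by
  rw [hg _ (rpow_nonneg ha.le _) y hy, ← rpow_mul ha.le, neg_mul, inv_mul_cancel₀ hα.ne',
    rpow_neg_one, ← mul_assoc, mul_inv_cancel₀ ha.ne', one_mul]

theorem scaling_subset_general {n m : ℕ} (s : Fin m → ℝ)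
    (R : Fin n → Finset (Fin m))
    (a : Fin m → ℝ) (ha : ∀ j, 0 < a j)
    (f : Fin m → ℝ → ℝ)
    (α : Fin m → ℝ) (hα : ∀ j, 0 < α j) (hhom : ∀ j, Homog (f j) (α j)) :
    NEX s f R ⊆ NEX s (fun j y => a j * f j y) R := by
  let c : Fin m → NNReal := fun j => (a j ^ (-(α j)⁻¹)).toNNReal
  have hc_coe : ∀ j, (c j : ℝ) = a j ^ (-(α j)⁻¹) := fun j =>
    Real.coe_toNNReal _ (rpow_nonneg (ha j).le _)
  have hc : ∀ j, 0 < c j := fun j => Real.toNNReal_pos.mpr (rpow_pos_of_pos (ha j) _)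
  refine NEX_subset_of_bidCost_scaleBid hc s R fun bi => Finset.sum_congr rfl fun j _ => ?_
  rw [bval_scaleBid, hc_coe]
  exact (hhom j).mul_apply_rpow_neg_inv_mul (hα j) (ha j) (bval_nonneg _)

/-- Lemma scaling, one inclusion: scaling homogeneous constraint curves by
positive constants `a_j` only enlarges the set of Nash equilibrium allocations:
`NE_X(ATP(f)) ⊆ NE_X(ATP(f'))` where `f'_j(b) = a_j · f_j(b)`. -/
theorem scaling_subset {n m : ℕ} (s : Fin m → ℝ) (hs : ∀ j, 0 < s j)
    (R : Fin n → Finset (Fin m)) (hR : ∀ i, (R i).Nonempty)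
    (a : Fin m → ℝ) (ha : ∀ j, 0 < a j)
    (f : Fin m → ℝ → ℝ) (hf : ∀ j, IsConstraintCurve (f j))
    (α : Fin m → ℝ) (hα : ∀ j, 0 < α j) (hhom : ∀ j, Homog (f j) (α j)) :
    NEX s f R ⊆ NEX s (fun j y => a j * f j y) R :=
  scaling_subset_general s R a ha f α hα hhom

end BandwidthAlloc
end
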